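/- arXiv:2108.13204 — 2 statements merged into one kernel-verified Lean document; each statement's English description precedes it below -/
import Mathlib

section
/- R_{1,2} = ∑_{n≥1} H_{n-1}/(n−1/2)² = 7ζ(3) − π²·ln(2). -/
/-!
Put `x = j + 1/2`, `y = k + 1` and consider the absolutely convergent Tornheim-type double series
`W = ∑_{j,k ≥ 0} 1 / (x y (x + y))`.

Since `1 / (x y) = (1/x + 1/y) / (x + y)` and `x + y = n + 3/2` on the diagonal `j + k = n`, summing
along diagonals gives `W = T + R`, where `T = ∑ h_{n-1} / (n - 1/2)²` is the analogue of `R` with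
odd harmonic numbers `h_n = ∑_{k ≤ n} 1/(k - 1/2)`.

Since `1 / (y (x + y)) = (1/y - 1/(x + y)) / x` and
`∑_k (1/(k+1) - 1/(k+j+3/2)) = h_{j+1} - 2 log 2`, summing over `k` first gives
`W = ∑_j (h_{j+1} - 2 log 2) / (j + 1/2)² = T + t̃(3) - 2 log 2 · t̃(2)`.

Hence `R = t̃(3) - 2 log 2 · t̃(2) = 7 ζ(3) - π² log 2`, using `t̃(s) = (2^s - 1) ζ(s)`.
-/

/-- odd harmonic numbers of order r: h_n^{(r)} = ∑_{k=1}^n 1/(k-1/2)^r -/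
noncomputable def oddH (r n : ℕ) : ℝ := ∑ k ∈ Finset.range n, (((k : ℝ) + 1/2) ^ r)⁻¹

/-- generalized harmonic numbers of order r: H_n^{(r)} = ∑_{k=1}^n 1/k^r -/
noncomputable def genH (r n : ℕ) : ℝ := ∑ k ∈ Finset.range n, (((k : ℝ) + 1) ^ r)⁻¹

/-- T_{p,q} = ∑_{n≥1} h_{n-1}^{(p)}/(n-1/2)^q -/
noncomputable def Tsum (p q : ℕ) : ℝ := ∑' n : ℕ, oddH p n / ((n : ℝ) + 1/2) ^ q

/-- S̃_{p,q} = ∑_{n≥1} h_n^{(p)}/n^q -/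
noncomputable def Ssum (p q : ℕ) : ℝ := ∑' n : ℕ, oddH p (n + 1) / ((n : ℝ) + 1) ^ q

/-- R_{p,q} = ∑_{n≥1} H_{n-1}^{(p)}/(n-1/2)^q -/
noncomputable def Rsum (p q : ℕ) : ℝ := ∑' n : ℕ, genH p n / ((n : ℝ) + 1/2) ^ q

/-- t̃(s) = ∑_{n≥1} 1/(n-1/2)^s -/
noncomputable def ttv (s : ℕ) : ℝ := ∑' n : ℕ, (((n : ℝ) + 1/2) ^ s)⁻¹

/-- ζ(s) = ∑_{n≥1} 1/n^s (for integer s ≥ 2) -/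
noncomputable def zv (s : ℕ) : ℝ := ∑' n : ℕ, (((n : ℝ) + 1) ^ s)⁻¹

open Finset Filter Real Topology

lemma summable_inv_add_rpow {a s : ℝ} (ha : 0 ≤ a) (hs : 1 < s) :
    Summable fun n : ℕ => ((n + a) ^ s)⁻¹ := by
  have h := (Real.summable_one_div_nat_add_rpow a s).2 hs
  refine h.congr fun n => ?_
  rw [abs_of_nonneg (by positivity), one_div]

lemma summable_inv_add_pow {a : ℝ} (ha : 0 ≤ a) {p : ℕ} (hp : 1 < p) :
    Summable fun n : ℕ => ((n + a) ^ p)⁻¹ := by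
  simpa only [← Real.rpow_natCast] using summable_inv_add_rpow ha (by exact_mod_cast hp)

lemma hasSum_sub_add_of_antitone {f : ℕ → ℝ} (hf : Antitone f) (h0 : Tendsto f atTop (𝓝 0))
    (d : ℕ) : HasSum (fun k => f k - f (k + d)) (∑ i ∈ range d, f i) := by
  induction d with
  | zero => simp
  | succ d ih =>
    have hstep : HasSum (fun k => f (k + d) - f (k + 1 + d)) (f d) := by
      rw [hasSum_iff_tendsto_nat_of_nonneg (fun k => sub_nonneg.2 (hf (by omega)))]
      simp_rw [sum_range_sub' (fun k => f (k + d)), zero_add]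
      simpa using tendsto_const_nhds.sub (h0.comp (tendsto_add_atTop_nat d))
    convert ih.add hstep using 1
    · ext k
      rw [show k + (d + 1) = k + 1 + d by omega]
      ring
    · rw [sum_range_succ]

lemma sum_range_inv_add_half_sub_inv_succ (N : ℕ) :
    ∑ k ∈ range N, (((k : ℝ) + 1/2)⁻¹ - ((k : ℝ) + 1)⁻¹) = 2 * (harmonic (2 * N) - harmonic N) := by
  induction N with
  | zero => simp
  | succ N ih =>
    rw [sum_range_succ, ih, show 2 * (N + 1) = 2 * N + 1 + 1 by ring, harmonic_succ,
      harmonic_succ, harmonic_succ]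
    push_cast
    field_simp
    ring

lemma hasSum_inv_add_half_sub_inv_succ :
    HasSum (fun k : ℕ => ((k : ℝ) + 1/2)⁻¹ - ((k : ℝ) + 1)⁻¹) (2 * log 2) := by
  have hpos (k : ℕ) : 0 ≤ ((k : ℝ) + 1/2)⁻¹ - ((k : ℝ) + 1)⁻¹ :=
    sub_nonneg.2 (inv_anti₀ (by positivity) (by linarith))
  rw [hasSum_iff_tendsto_nat_of_nonneg hpos]
  simp_rw [sum_range_inv_add_half_sub_inv_succ]
  have h2N : Tendsto (fun N : ℕ => (harmonic (2 * N) : ℝ) - log ((2 * N : ℕ) : ℝ)) atTop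
      (𝓝 eulerMascheroniConstant) :=
    tendsto_harmonic_sub_log.comp (tendsto_id.const_mul_atTop' two_pos)
  have hlim := ((h2N.sub tendsto_harmonic_sub_log).add_const (log 2)).const_mul 2
  rw [sub_self, zero_add] at hlim
  refine hlim.congr' ?_
  filter_upwards [eventually_ne_atTop 0] with N hN
  rw [Nat.cast_mul, Nat.cast_ofNat, log_mul two_ne_zero (by exact_mod_cast hN)]
  ring

noncomputable def tornheimTerm (x y : ℝ) : ℝ := (x * y * (x + y))⁻¹

section tornheimTerm

variable {x y : ℝ}

lemma tornheimTerm_nonneg (hx : 0 ≤ x) (hy : 0 ≤ y) : 0 ≤ tornheimTerm x y := by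
  unfold tornheimTerm; positivity

lemma tornheimTerm_eq_inv_sq_mul_sub (hx : x ≠ 0) (hy : y ≠ 0) (hxy : x + y ≠ 0) :
    tornheimTerm x y = (x ^ 2)⁻¹ * (y⁻¹ - (x + y)⁻¹) := by
  unfold tornheimTerm
  field_simp
  ring

lemma tornheimTerm_eq_inv_add_sq_mul_add (hx : x ≠ 0) (hy : y ≠ 0) (hxy : x + y ≠ 0) :
    tornheimTerm x y = ((x + y) ^ 2)⁻¹ * (x⁻¹ + y⁻¹) := by
  unfold tornheimTerm
  field_simp
  ring

lemma tornheimTerm_le (hx : 0 < x) (hy : 0 < y) :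
    tornheimTerm x y ≤ (x ^ (3/2 : ℝ))⁻¹ * (y ^ (3/2 : ℝ))⁻¹ := by
  have hsqrt : √(x * y) ≤ x + y := Real.sqrt_le_iff.2 ⟨by positivity, by nlinarith⟩
  have key : (x * y) ^ (3/2 : ℝ) ≤ x * y * (x + y) := by
    rw [show (3/2 : ℝ) = 1 + 1/2 by norm_num, rpow_add (by positivity), rpow_one,
      ← Real.sqrt_eq_rpow]
    gcongr
  rw [← mul_inv, ← mul_rpow hx.le hy.le]
  exact inv_anti₀ (by positivity) key

end tornheimTerm

lemma summable_tornheimTerm {a b : ℝ} (ha : 0 < a) (hb : 0 < b) :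
    Summable fun p : ℕ × ℕ => tornheimTerm (p.1 + a) (p.2 + b) := by
  have hbound := (summable_inv_add_rpow ha.le (by norm_num : (1 : ℝ) < 3/2)).mul_of_nonneg
    (summable_inv_add_rpow hb.le (by norm_num : (1 : ℝ) < 3/2))
    (fun n => by positivity) (fun n => by positivity)
  exact hbound.of_nonneg_of_le (fun p => tornheimTerm_nonneg (by positivity) (by positivity))
    fun p => tornheimTerm_le (by positivity) (by positivity)

lemma HasSum.sum_antidiagonal {α : Type*} [AddCommMonoid α] [TopologicalSpace α] [ContinuousAdd α]
    [RegularSpace α] {f : ℕ × ℕ → α} {a : α} (h : HasSum f a) :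
    HasSum (fun n => ∑ p ∈ antidiagonal n, f p) a :=
  (HasAntidiagonal.sigmaAntidiagonalEquivProd.hasSum_iff.2 h).sigma fun n =>
    (antidiagonal n).hasSum f

lemma oddH_succ (r n : ℕ) : oddH r (n + 1) = oddH r n + (((n : ℝ) + 1/2) ^ r)⁻¹ :=
  sum_range_succ _ _

lemma oddH_one (n : ℕ) : oddH 1 n = ∑ k ∈ range n, ((k : ℝ) + 1/2)⁻¹ := by
  simp only [oddH, pow_one]

lemma genH_one (n : ℕ) : genH 1 n = ∑ k ∈ range n, ((k : ℝ) + 1)⁻¹ := by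
  simp only [genH, pow_one]

lemma oddH_nonneg (r n : ℕ) : 0 ≤ oddH r n :=
  sum_nonneg fun _ _ => by positivity

lemma genH_nonneg (r n : ℕ) : 0 ≤ genH r n :=
  sum_nonneg fun _ _ => by positivity

lemma hasSum_inv_succ_sub_inv_add (j : ℕ) :
    HasSum (fun k : ℕ => ((k : ℝ) + 1)⁻¹ - ((k : ℝ) + j + 3/2)⁻¹) (oddH 1 (j + 1) - 2 * log 2) := by
  have hanti : Antitone fun k : ℕ => ((k : ℝ) + 1/2)⁻¹ :=
    fun a b hab => inv_anti₀ (by positivity) (by gcongr)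
  have hlim : Tendsto (fun k : ℕ => ((k : ℝ) + 1/2)⁻¹) atTop (𝓝 0) :=
    tendsto_inv_atTop_zero.comp (tendsto_atTop_add_const_right _ _ tendsto_natCast_atTop_atTop)
  have h := (hasSum_sub_add_of_antitone hanti hlim (j + 1)).sub hasSum_inv_add_half_sub_inv_succ
  rw [← oddH_one] at h
  refine h.congr_fun fun k => ?_
  push_cast
  ring

lemma hasSum_tornheimTerm_fiber (j : ℕ) :
    HasSum (fun k : ℕ => tornheimTerm ((j : ℝ) + 1/2) ((k : ℝ) + 1))
      ((((j : ℝ) + 1/2) ^ 2)⁻¹ * (oddH 1 (j + 1) - 2 * log 2)) := by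
  refine ((hasSum_inv_succ_sub_inv_add j).mul_left _).congr_fun fun k => ?_
  rw [tornheimTerm_eq_inv_sq_mul_sub (by positivity) (by positivity) (by positivity)]
  ring

lemma sum_antidiagonal_tornheimTerm (n : ℕ) :
    ∑ p ∈ antidiagonal n, tornheimTerm ((p.1 : ℝ) + 1/2) ((p.2 : ℝ) + 1)
      = (oddH 1 (n + 1) + genH 1 (n + 1)) / (((n + 1 : ℕ) : ℝ) + 1/2) ^ 2 := by
  have hterm (p) (hp : p ∈ antidiagonal n) : tornheimTerm ((p.1 : ℝ) + 1/2) ((p.2 : ℝ) + 1)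
      = ((((n + 1 : ℕ) : ℝ) + 1/2) ^ 2)⁻¹ * (((p.1 : ℝ) + 1/2)⁻¹ + ((p.2 : ℝ) + 1)⁻¹) := by
    rw [tornheimTerm_eq_inv_add_sq_mul_add (by positivity) (by positivity) (by positivity)]
    rw [HasAntidiagonal.mem_antidiagonal] at hp
    rw [← hp]
    push_cast
    ring
  have hfst : ∑ p ∈ antidiagonal n, ((p.1 : ℝ) + 1/2)⁻¹ = oddH 1 (n + 1) :=
    (Nat.sum_antidiagonal_eq_sum_range_succ_mk _ n).trans (oddH_one _).symm
  have hsnd : ∑ p ∈ antidiagonal n, ((p.2 : ℝ) + 1)⁻¹ = genH 1 (n + 1) :=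
    (Nat.sum_antidiagonal_swap.symm.trans (Nat.sum_antidiagonal_eq_sum_range_succ_mk _ n)).trans
      (genH_one _).symm
  rw [sum_congr rfl hterm, ← mul_sum, sum_add_distrib, hfst, hsnd, inv_mul_eq_div]

lemma hasSum_oddH_add_genH_div :
    HasSum (fun n : ℕ => (oddH 1 n + genH 1 n) / ((n : ℝ) + 1/2) ^ 2)
      (∑' p : ℕ × ℕ, tornheimTerm ((p.1 : ℝ) + 1/2) ((p.2 : ℝ) + 1)) := by
  have h := (summable_tornheimTerm (by norm_num : (0 : ℝ) < 1/2) one_pos).hasSum.sum_antidiagonal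
  simp_rw [sum_antidiagonal_tornheimTerm] at h
  -- the `n = 0` term vanishes, so the shift from `n + 1` to `n` costs nothing
  rw [← hasSum_nat_add_iff' 1]
  simpa [oddH, genH] using h

lemma summable_oddH_div : Summable fun n : ℕ => oddH 1 n / ((n : ℝ) + 1/2) ^ 2 :=
  hasSum_oddH_add_genH_div.summable.of_nonneg_of_le
    (fun n => div_nonneg (oddH_nonneg 1 n) (by positivity))
    fun n => by gcongr; exact le_add_of_nonneg_right (genH_nonneg 1 n)

lemma summable_genH_div : Summable fun n : ℕ => genH 1 n / ((n : ℝ) + 1/2) ^ 2 :=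
  hasSum_oddH_add_genH_div.summable.of_nonneg_of_le
    (fun n => div_nonneg (genH_nonneg 1 n) (by positivity))
    fun n => by gcongr; exact le_add_of_nonneg_left (oddH_nonneg 1 n)

lemma Tsum_add_Rsum_eq_tsum_tornheimTerm :
    Tsum 1 2 + Rsum 1 2 = ∑' p : ℕ × ℕ, tornheimTerm ((p.1 : ℝ) + 1/2) ((p.2 : ℝ) + 1) := by
  refine (summable_oddH_div.hasSum.add summable_genH_div.hasSum).unique ?_
  simpa only [add_div] using hasSum_oddH_add_genH_div

lemma Tsum_add_ttv_eq_tsum_tornheimTerm :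
    Tsum 1 2 + ttv 3 - 2 * log 2 * ttv 2
      = ∑' p : ℕ × ℕ, tornheimTerm ((p.1 : ℝ) + 1/2) ((p.2 : ℝ) + 1) := by
  have hfib := (summable_tornheimTerm (by norm_num : (0 : ℝ) < 1/2) one_pos).hasSum.prod_fiberwise
    hasSum_tornheimTerm_fiber
  have h2 : HasSum (fun n : ℕ => (((n : ℝ) + 1/2) ^ 2)⁻¹) (ttv 2) :=
    (summable_inv_add_pow (by norm_num) (by norm_num)).hasSum
  have h3 : HasSum (fun n : ℕ => (((n : ℝ) + 1/2) ^ 3)⁻¹) (ttv 3) :=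
    (summable_inv_add_pow (by norm_num) (by norm_num)).hasSum
  refine ((summable_oddH_div.hasSum.add h3).sub (h2.mul_left (2 * log 2))).unique
    (hfib.congr_fun fun j => ?_)
  rw [oddH_succ, pow_one]
  field_simp

lemma ttv_eq_mul_zv {s : ℕ} (hs : 1 < s) : ttv s = (2 ^ s - 1) * zv s := by
  have httv : HasSum (fun n : ℕ => (((n : ℝ) + 1/2) ^ s)⁻¹) (ttv s) :=
    (summable_inv_add_pow (by norm_num) hs).hasSum
  have hz : HasSum (fun n : ℕ => (((n : ℝ) + 1) ^ s)⁻¹) (zv s) :=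
    (summable_inv_add_pow zero_le_one hs).hasSum
  -- split `ζ(s)` into its terms at odd `2k + 1` and even `2k + 2`
  have heven : HasSum (fun k : ℕ => ((((2 * k : ℕ) : ℝ) + 1) ^ s)⁻¹) ((2 ^ s)⁻¹ * ttv s) :=
    (httv.mul_left _).congr_fun fun k => by
      rw [← mul_inv, ← mul_pow]
      push_cast
      ring_nf
  have hodd : HasSum (fun k : ℕ => ((((2 * k + 1 : ℕ) : ℝ) + 1) ^ s)⁻¹) ((2 ^ s)⁻¹ * zv s) :=
    (hz.mul_left _).congr_fun fun k => by
      rw [← mul_inv, ← mul_pow]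
      push_cast
      ring_nf
  have hsplit := (heven.even_add_odd (f := fun n : ℕ => (((n : ℝ) + 1) ^ s)⁻¹) hodd).unique hz
  have h2s : (2 : ℝ) ^ s ≠ 0 := by positivity
  field_simp at hsplit
  linarith

lemma zv_two : zv 2 = π ^ 2 / 6 := by
  have h := (hasSum_nat_add_iff' 1).2 hasSum_zeta_two
  simp only [range_one, sum_singleton, Nat.cast_zero, Nat.cast_add, Nat.cast_one, one_div] at h
  norm_num at h
  exact h.tsum_eq

theorem stmt4 : Rsum 1 2 = 7 * zv 3 - Real.pi ^ 2 * Real.log 2 := by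
  have hR : Rsum 1 2 = ttv 3 - 2 * log 2 * ttv 2 := by
    linarith [Tsum_add_Rsum_eq_tsum_tornheimTerm, Tsum_add_ttv_eq_tsum_tornheimTerm]
  rw [hR, ttv_eq_mul_zv (by norm_num : 1 < 3), ttv_eq_mul_zv (by norm_num : 1 < 2), zv_two]
  ring
end

section
/- For integers n ≥ 0: ∑_{i=0}^{2n} (−1)^i·C(2n,i)·G_{i+4}·G_{2n+4−i}/((i+4)(2n+4−i)) = G_{2n+8}/(70(2n+8)) + G_{2n+4}/(30(2n+4)) − G_{2n+2}/(21(2n+2)), where G_n are the Genocchi numbers. -/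
/-- Genocchi numbers: G_n = 2(1-2^n)B_n, with B_n the Bernoulli numbers (B_1 = -1/2). -/
noncomputable def genocchi (n : ℕ) : ℚ := 2 * (1 - 2 ^ n) * bernoulli n

/-!
`U = 2 / (exp t + 1) = ∑ G_{m+1} t^m / (m+1)!` satisfies the Riccati equation `2 U' = U² - 2 U`,
so `2^k U⁽ᵏ⁾ = P_k(U)` for polynomials with `P_0 = X`, `P_{k+1} = P_k' (X² - 2X)`. The polynomial
identity `420 P_3² = 3 P_7 + 112 P_3 - 640 P_1` becomes
`26880 (U''')² = 384 U⁽⁷⁾ + 896 U''' - 1280 U'`, and since `U⁽ᵏ⁾` has coefficients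
`G_{m+k+1} / ((m+k+1) m!)`, comparing coefficients of `t^{2n}` gives the formula. The signs
`(-1)^i` are harmless because `G_{i+4} = 0` for odd `i`.
-/

open scoped Nat
open PowerSeries

/-- `odeDeriv p k` expresses the `k`-th derivative of a solution of `u' = p(u)` as a polynomial
in `u`. -/
noncomputable def Polynomial.odeDeriv {R : Type*} [CommSemiring R] (p : Polynomial R) :
    ℕ → Polynomial R
  | 0 => X
  | k + 1 => derivative (odeDeriv p k) * p

open Polynomial in
theorem Derivation.smul_iterate_eq_aeval_odeDeriv {R A : Type*} [CommSemiring R]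
    [CommSemiring A] [Algebra R A] (D : Derivation R A A) {u : A} {c : R} {p : R[X]}
    (hu : c • D u = aeval u p) (k : ℕ) : c ^ k • D^[k] u = aeval u (p.odeDeriv k) := by
  induction k with
  | zero => simp [odeDeriv]
  | succ k ih =>
    rw [Function.iterate_succ_apply', odeDeriv, map_mul, ← hu, pow_succ', mul_smul,
      ← D.map_smul, ih, D.map_aeval, smul_eq_mul, mul_smul_comm]

open Polynomial in
theorem Polynomial.odeDeriv_X_sq_sub_two_X :
    (420 : ℚ[X]) * odeDeriv (X ^ 2 - 2 * X) 3 ^ 2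
      = 3 * odeDeriv (X ^ 2 - 2 * X) 7 + 112 * odeDeriv (X ^ 2 - 2 * X) 3
        - 640 * odeDeriv (X ^ 2 - 2 * X) 1 := by
  simp only [odeDeriv, derivative_mul, derivative_X, derivative_sub, derivative_add,
    derivative_X_pow, derivative_ofNat, derivative_natCast, derivative_one, derivative_zero,
    map_natCast, zero_mul, zero_add, mul_one]
  ring

theorem genocchi_eq_zero_of_odd {n : ℕ} (hn : Odd n) (h1 : n ≠ 1) : genocchi n = 0 := by
  simp [genocchi, bernoulli, bernoulli'_eq_zero_of_odd hn (by grind [Odd])]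

theorem neg_one_pow_mul_genocchi {n : ℕ} (h1 : n ≠ 1) : (-1) ^ n * genocchi n = genocchi n := by
  rcases n.even_or_odd with he | ho
  · rw [he.neg_one_pow, one_mul]
  · rw [genocchi_eq_zero_of_odd ho h1, mul_zero]

/-- `2 / (exp t + 1)`, the generating function `∑ G_n t^n / n!` divided by `t`. -/
noncomputable def genocchiShift : ℚ⟦X⟧ := mk fun n => genocchi (n + 1) / (n + 1)!

theorem X_mul_genocchiShift :
    X * genocchiShift = 2 * (bernoulliPowerSeries ℚ - rescale 2 (bernoulliPowerSeries ℚ)) := by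
  rw [← map_ofNat C 2]
  ext (_ | n) <;> simp only [coeff_C_mul, map_sub, coeff_rescale]
  · simp [coeff_zero_X_mul]
  · simp [coeff_succ_X_mul, genocchiShift, bernoulliPowerSeries, genocchi]
    ring

theorem genocchiShift_mul_exp_add_one : genocchiShift * (exp ℚ + 1) = 2 := by
  have hB := bernoulliPowerSeries_mul_exp_sub_one ℚ
  have hB2 : rescale 2 (bernoulliPowerSeries ℚ) * (exp ℚ ^ 2 - 1) = 2 * X := by
    have := congrArg (rescale (2 : ℚ)) hB
    rwa [map_mul, map_sub, map_one, rescale_X, ← Nat.cast_ofNat, ← exp_pow_eq_rescale_exp,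
      Nat.cast_ofNat, map_ofNat C 2] at this
  have hne : (X : ℚ⟦X⟧) * (exp ℚ - 1) ≠ 0 := by
    refine mul_ne_zero X_ne_zero fun h => ?_
    simpa [coeff_exp] using congrArg (coeff 1) h
  refine mul_left_cancel₀ hne ?_
  linear_combination (exp ℚ - 1) * (exp ℚ + 1) * X_mul_genocchiShift
    + 2 * (exp ℚ + 1) * hB - 2 * hB2

theorem two_smul_derivative_genocchiShift :
    (2 : ℚ) • d⁄dX ℚ genocchiShift
      = Polynomial.aeval genocchiShift (Polynomial.X ^ 2 - 2 * Polynomial.X : Polynomial ℚ) := by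
  have h := genocchiShift_mul_exp_add_one
  have hD : genocchiShift * exp ℚ + (exp ℚ + 1) * d⁄dX ℚ genocchiShift = 0 := by
    have h2 : d⁄dX ℚ (2 : ℚ⟦X⟧) = 0 := by simpa using (d⁄dX ℚ).map_natCast 2
    simpa [derivative_exp, mul_comm, h2] using congrArg (d⁄dX ℚ) h
  rw [Algebra.smul_def, map_ofNat]
  simp only [map_sub, map_pow, Polynomial.aeval_X, map_mul, map_ofNat]
  linear_combination genocchiShift * hD - (genocchiShift + d⁄dX ℚ genocchiShift) * h

theorem sq_iterate_three_derivative_genocchiShift :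
    26880 * ((d⁄dX ℚ)^[3] genocchiShift) ^ 2
      = 384 * (d⁄dX ℚ)^[7] genocchiShift + 896 * (d⁄dX ℚ)^[3] genocchiShift
        - 1280 * (d⁄dX ℚ)^[1] genocchiShift := by
  have hD k := (d⁄dX ℚ).smul_iterate_eq_aeval_odeDeriv two_smul_derivative_genocchiShift k
  simp only [Algebra.smul_def, map_pow, map_ofNat] at hD
  have hP := congrArg (Polynomial.aeval genocchiShift) Polynomial.odeDeriv_X_sq_sub_two_X
  simp only [map_sub, map_add, map_mul, map_pow, map_ofNat, ← hD] at hP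
  linear_combination hP

theorem iterate_derivative_genocchiShift (k : ℕ) :
    (d⁄dX ℚ)^[k] genocchiShift
      = mk fun m => genocchi (m + k + 1) / ((m + k + 1 : ℕ) : ℚ) / m ! := by
  ext m
  rw [coeff_iterate_derivative, genocchiShift, coeff_mk, coeff_mk, Nat.factorial_succ,
    ← Nat.factorial_mul_ascFactorial m k]
  have := Nat.factorial_ne_zero m
  have := Nat.ascFactorial_pos (m + 1) k
  push_cast
  field_simp

theorem factorial_mul_coeff_mul_mk_div_factorial {K : Type*} [Field K] [CharZero K]
    (a b : ℕ → K) (n : ℕ) :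
    (n ! : K) * coeff n (mk (fun m => a m / m !) * mk fun m => b m / m !)
      = ∑ i ∈ Finset.range (n + 1), (n.choose i : K) * a i * b (n - i) := by
  rw [coeff_mul, Finset.Nat.sum_antidiagonal_eq_sum_range_succ_mk, Finset.mul_sum]
  refine Finset.sum_congr rfl fun i hi => ?_
  rw [coeff_mk, coeff_mk, Nat.cast_choose K (Finset.mem_range_succ_iff.mp hi)]
  have := Nat.factorial_ne_zero i
  have := Nat.factorial_ne_zero (n - i)
  field_simp

theorem factorial_mul_coeff_iterate_derivative_genocchiShift (k m : ℕ) :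
    (m ! : ℚ) * coeff m ((d⁄dX ℚ)^[k] genocchiShift) = genocchi (m + k + 1) / (m + k + 1 : ℕ) := by
  rw [iterate_derivative_genocchiShift, coeff_mk]
  have := Nat.factorial_ne_zero m
  field_simp

theorem stmt16 (n : ℕ) :
    ∑ i ∈ Finset.range (2 * n + 1), (-1 : ℚ) ^ i * ((2 * n).choose i : ℚ)
        * genocchi (i + 4) * genocchi (2 * n + 4 - i)
        / (((i + 4 : ℕ) : ℚ) * ((2 * n + 4 - i : ℕ) : ℚ))
    = genocchi (2 * n + 8) / (70 * ((2 * n + 8 : ℕ) : ℚ))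
        + genocchi (2 * n + 4) / (30 * ((2 * n + 4 : ℕ) : ℚ))
        - genocchi (2 * n + 2) / (21 * ((2 * n + 2 : ℕ) : ℚ)) := by
  have hsq : ((2 * n)! : ℚ) * coeff (2 * n) (((d⁄dX ℚ)^[3] genocchiShift) ^ 2)
      = ∑ i ∈ Finset.range (2 * n + 1), (-1 : ℚ) ^ i * ((2 * n).choose i : ℚ)
        * genocchi (i + 4) * genocchi (2 * n + 4 - i)
        / (((i + 4 : ℕ) : ℚ) * ((2 * n + 4 - i : ℕ) : ℚ)) := by
    rw [sq, iterate_derivative_genocchiShift, factorial_mul_coeff_mul_mk_div_factorial]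
    refine Finset.sum_congr rfl fun i hi => ?_
    have hsign : (-1) ^ i * genocchi (i + 4) = genocchi (i + 4) := by
      have := neg_one_pow_mul_genocchi (n := i + 4) (by omega)
      rwa [pow_add, show (-1 : ℚ) ^ 4 = 1 by norm_num, mul_one] at this
    rw [show 2 * n + 4 - i = 2 * n - i + 3 + 1 by grind]
    linear_combination (-((2 * n).choose i : ℚ) * genocchi (2 * n - i + 3 + 1)
      / (((i + 4 : ℕ) : ℚ) * ((2 * n - i + 3 + 1 : ℕ) : ℚ))) * hsign
  have hcoeff := congrArg (fun f => ((2 * n)! : ℚ) * coeff (2 * n) f)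
    sq_iterate_three_derivative_genocchiShift
  simp only [← map_ofNat C, map_sub, map_add, coeff_C_mul] at hcoeff
  have h1 := factorial_mul_coeff_iterate_derivative_genocchiShift 1 (2 * n)
  have h3 := factorial_mul_coeff_iterate_derivative_genocchiShift 3 (2 * n)
  have h7 := factorial_mul_coeff_iterate_derivative_genocchiShift 7 (2 * n)
  linear_combination -hsq + hcoeff / 26880 + h7 / 70 + h3 / 30 - h1 / 21
end
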